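/- For every fixed t ∈ [0,T], the map y ↦ V(t,y) − G(t,y) is nonincreasing (antitone) on (0,∞): if 0 < y ≤ y', then V(t,y') − G(t,y') ≤ V(t,y) − G(t,y). -/

import Mathlib

open MeasureTheory ProbabilityTheory

/-- A standard Brownian motion with respect to the filtration `ℱ` under the probability
measure `Pr`: it starts at `0` a.s., has a.s. continuous paths, is adapted, and for
`0 ≤ u ≤ s` the increment `B s - B u` is independent of `ℱ u` and Gaussian with mean `0`
and variance `s - u`. -/
structure IsStandardBM {Ω : Type*} {mΩ : MeasurableSpace Ω}
    (Pr : Measure Ω) (ℱ : Filtration ℝ mΩ) (B : ℝ → Ω → ℝ) : Prop where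
  zero : ∀ᵐ ω ∂Pr, B 0 ω = 0
  cont : ∀ᵐ ω ∂Pr, Continuous fun s => B s ω
  adapted : Adapted ℱ B
  indep : ∀ u s : ℝ, 0 ≤ u → u ≤ s →
    Indep (MeasurableSpace.comap (fun ω => B s ω - B u ω) Real.measurableSpace) (ℱ u) Pr
  gauss : ∀ u s : ℝ, 0 ≤ u → u ≤ s →
    Pr.map (fun ω => B s ω - B u ω) = gaussianReal 0 (Real.toNNReal (s - u))

/-- `G t y`: the expected reward from stopping immediately at time `t` when the price is `y`. -/
noncomputable def G (M P μ T t y : ℝ) : ℝ :=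
  M * P * t + M * y * Real.exp (μ * (T - t)) * (T - t)

/-- `V t y`: the value function, the supremum of expected rewards `E[R^{t,y}(τ)]` over all
stopping times `τ` of the filtration `ℱ` with `t ≤ τ ≤ T` almost surely, where
`R^{t,y}(τ) = M·P·τ + M·Y_T^{t,y}·(T − τ)` and
`Y_T^{t,y} = y·exp((μ − σ²/2)(T − t) + σ(B_T − B_t))`. -/
noncomputable def V {Ω : Type*} {mΩ : MeasurableSpace Ω}
    (Pr : Measure Ω) (ℱ : Filtration ℝ mΩ) (B : ℝ → Ω → ℝ)
    (M P σ μ T t y : ℝ) : ℝ :=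
  sSup {x : ℝ | ∃ τ : Ω → ℝ, IsStoppingTime ℱ (fun ω => (τ ω : WithTop ℝ)) ∧
    (∀ᵐ ω ∂Pr, t ≤ τ ω ∧ τ ω ≤ T) ∧
    x = ∫ ω, (M * P * τ ω +
      M * (y * Real.exp ((μ - σ ^ 2 / 2) * (T - t) + σ * (B T ω - B t ω))) * (T - τ ω)) ∂Pr}

/-!
Fix a stopping time `τ` with `t ≤ τ ≤ T`. Raising the initial price from `y` to `y'` changes
the reward `M P τ + M y Z (T - τ)` (with `Z = Y_T^{t,y} / y ≥ 0`) by `M (y' - y) Z (T - τ)`,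
which is at most its value `M (y' - y) Z (T - t)` at `τ = t`. Since `E[Z] = e^{μ(T-t)}`
by the Gaussian moment generating function, taking expectations and then suprema gives
`V(t,y') - V(t,y) ≤ M (y' - y) (T - t) e^{μ(T-t)} = G(t,y') - G(t,y)`.
-/

section

variable {Ω : Type*} {mΩ : MeasurableSpace Ω}

lemma measurable_of_isStoppingTime_coe {ℱ : Filtration ℝ mΩ} {τ : Ω → ℝ}
    (hτ : IsStoppingTime ℱ (fun ω => (τ ω : WithTop ℝ))) : Measurable τ := by
  simpa using (hτ.measurable.mono hτ.measurableSpace_le le_rfl).untopD (0 : ℝ)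

section Reward

variable {Pr : Measure Ω} {Z τ : Ω → ℝ} {M P T t y y' : ℝ}

lemma integrable_reward [IsFiniteMeasure Pr] (hZ : Integrable Z Pr)
    (hτ : Measurable τ) (hτtT : ∀ᵐ ω ∂Pr, t ≤ τ ω ∧ τ ω ≤ T) :
    Integrable (fun ω => M * P * τ ω + M * (y * Z ω) * (T - τ ω)) Pr := by
  have hτint : Integrable τ Pr :=
    .of_bound hτ.aestronglyMeasurable (max |t| |T|) <| by
      filter_upwards [hτtT] with ω hω
      exact abs_le_max_abs_abs hω.1 hω.2
  refine (hτint.const_mul (M * P)).add ((hZ.const_mul y).const_mul M |>.mul_bdd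
    (measurable_const.sub hτ).aestronglyMeasurable (c := T - t) ?_)
  filter_upwards [hτtT] with ω hω
  rw [Real.norm_eq_abs, abs_le]
  constructor <;> linarith [hω.1, hω.2]

variable [IsProbabilityMeasure Pr]

lemma integral_reward_le (hM : 0 ≤ M) (hP : 0 ≤ P) (hy : 0 ≤ y) (hZ0 : ∀ ω, 0 ≤ Z ω)
    (hZ : Integrable Z Pr) (hτ : Measurable τ) (hτtT : ∀ᵐ ω ∂Pr, t ≤ τ ω ∧ τ ω ≤ T) :
    ∫ ω, (M * P * τ ω + M * (y * Z ω) * (T - τ ω)) ∂Pr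
      ≤ M * P * T + M * y * (T - t) * ∫ ω, Z ω ∂Pr := by
  calc ∫ ω, (M * P * τ ω + M * (y * Z ω) * (T - τ ω)) ∂Pr
      ≤ ∫ ω, (M * P * T + M * y * (T - t) * Z ω) ∂Pr := by
        refine integral_mono_ae (integrable_reward hZ hτ hτtT)
          ((integrable_const _).add (hZ.const_mul _)) ?_
        filter_upwards [hτtT] with ω ⟨htτ, hτT⟩
        have hMyZ : 0 ≤ M * y * Z ω := mul_nonneg (mul_nonneg hM hy) (hZ0 ω)
        nlinarith [mul_nonneg hM hP]
    _ = M * P * T + M * y * (T - t) * ∫ ω, Z ω ∂Pr := by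
        rw [integral_add (integrable_const _) (hZ.const_mul _), integral_const,
          integral_const_mul, probReal_univ, one_smul]

lemma integral_reward_le_add (hM : 0 ≤ M) (hyy' : y ≤ y') (hZ0 : ∀ ω, 0 ≤ Z ω)
    (hZ : Integrable Z Pr) (hτ : Measurable τ) (hτtT : ∀ᵐ ω ∂Pr, t ≤ τ ω ∧ τ ω ≤ T) :
    ∫ ω, (M * P * τ ω + M * (y' * Z ω) * (T - τ ω)) ∂Pr
      ≤ ∫ ω, (M * P * τ ω + M * (y * Z ω) * (T - τ ω)) ∂Pr
        + M * (y' - y) * (T - t) * ∫ ω, Z ω ∂Pr := by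
  have hint := integrable_reward (M := M) (P := P) (y := y) hZ hτ hτtT
  calc ∫ ω, (M * P * τ ω + M * (y' * Z ω) * (T - τ ω)) ∂Pr
      ≤ ∫ ω, (M * P * τ ω + M * (y * Z ω) * (T - τ ω) + M * (y' - y) * (T - t) * Z ω) ∂Pr := by
        refine integral_mono_ae (integrable_reward hZ hτ hτtT) (hint.add (hZ.const_mul _)) ?_
        filter_upwards [hτtT] with ω ⟨htτ, _⟩
        have hMZ : 0 ≤ M * (y' - y) * Z ω :=
          mul_nonneg (mul_nonneg hM (sub_nonneg.2 hyy')) (hZ0 ω)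
        nlinarith
    _ = _ := by rw [integral_add hint (hZ.const_mul _), integral_const_mul]

end Reward

def stoppingRewards (Pr : Measure Ω) (ℱ : Filtration ℝ mΩ) (M P T t y : ℝ) (Z : Ω → ℝ) :
    Set ℝ :=
  {x | ∃ τ : Ω → ℝ, IsStoppingTime ℱ (fun ω => (τ ω : WithTop ℝ)) ∧
    (∀ᵐ ω ∂Pr, t ≤ τ ω ∧ τ ω ≤ T) ∧ x = ∫ ω, (M * P * τ ω + M * (y * Z ω) * (T - τ ω)) ∂Pr}

section StoppingRewards

variable {Pr : Measure Ω} [IsProbabilityMeasure Pr] {ℱ : Filtration ℝ mΩ} {Z : Ω → ℝ}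
  {M P T t y y' : ℝ}

lemma bddAbove_stoppingRewards (hM : 0 ≤ M) (hP : 0 ≤ P) (hy : 0 ≤ y) (hZ0 : ∀ ω, 0 ≤ Z ω)
    (hZ : Integrable Z Pr) : BddAbove (stoppingRewards Pr ℱ M P T t y Z) := by
  refine ⟨M * P * T + M * y * (T - t) * ∫ ω, Z ω ∂Pr, ?_⟩
  rintro _ ⟨τ, hτ, hτtT, rfl⟩
  exact integral_reward_le hM hP hy hZ0 hZ (measurable_of_isStoppingTime_coe hτ) hτtT

lemma sSup_stoppingRewards_le_add (htT : t ≤ T) (hM : 0 ≤ M) (hP : 0 ≤ P) (hy : 0 ≤ y)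
    (hyy' : y ≤ y') (hZ0 : ∀ ω, 0 ≤ Z ω) (hZ : Integrable Z Pr) :
    sSup (stoppingRewards Pr ℱ M P T t y' Z)
      ≤ sSup (stoppingRewards Pr ℱ M P T t y Z) + M * (y' - y) * (T - t) * ∫ ω, Z ω ∂Pr := by
  have hne : (stoppingRewards Pr ℱ M P T t y' Z).Nonempty :=
    ⟨_, fun _ => t, isStoppingTime_const ℱ t, ae_of_all _ fun _ => ⟨le_rfl, htT⟩, rfl⟩
  refine csSup_le hne ?_
  rintro _ ⟨τ, hτ, hτtT, rfl⟩
  grw [integral_reward_le_add hM hyy' hZ0 hZ (measurable_of_isStoppingTime_coe hτ) hτtT]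
  gcongr
  exact le_csSup (bddAbove_stoppingRewards hM hP hy hZ0 hZ) ⟨τ, hτ, hτtT, rfl⟩

end StoppingRewards

/-- `Y_T^{t,y} = y * gbmFactor B σ μ T t`. -/
noncomputable def gbmFactor (B : ℝ → Ω → ℝ) (σ μ T t : ℝ) (ω : Ω) : ℝ :=
  Real.exp ((μ - σ ^ 2 / 2) * (T - t) + σ * (B T ω - B t ω))

lemma gbmFactor_nonneg (B : ℝ → Ω → ℝ) (σ μ T t : ℝ) (ω : Ω) : 0 ≤ gbmFactor B σ μ T t ω :=
  (Real.exp_pos _).le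

lemma V_eq_sSup_stoppingRewards (Pr : Measure Ω) (ℱ : Filtration ℝ mΩ) (B : ℝ → Ω → ℝ)
    (M P σ μ T t y : ℝ) :
    V Pr ℱ B M P σ μ T t y = sSup (stoppingRewards Pr ℱ M P T t y (gbmFactor B σ μ T t)) :=
  rfl

namespace IsStandardBM

variable {Pr : Measure Ω} {ℱ : Filtration ℝ mΩ} {B : ℝ → Ω → ℝ} {σ μ T t : ℝ}

lemma mgf_increment (hB : IsStandardBM Pr ℱ B) (ht : 0 ≤ t) (htT : t ≤ T) (c : ℝ) :
    mgf (fun ω => B T ω - B t ω) Pr c = Real.exp ((T - t) * c ^ 2 / 2) := by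
  rw [mgf_gaussianReal (hB.gauss t T ht htT), Real.coe_toNNReal _ (sub_nonneg.2 htT), zero_mul,
    zero_add]

lemma integrable_gbmFactor [IsProbabilityMeasure Pr] (hB : IsStandardBM Pr ℱ B) (ht : 0 ≤ t)
    (htT : t ≤ T) :
    Integrable (gbmFactor B σ μ T t) Pr := by
  have h : Integrable (fun ω => Real.exp (σ * (B T ω - B t ω))) Pr := by
    rw [← mgf_pos_iff, hB.mgf_increment ht htT]
    exact Real.exp_pos _
  have hfactor : gbmFactor B σ μ T t
      = fun ω => Real.exp ((μ - σ ^ 2 / 2) * (T - t)) * Real.exp (σ * (B T ω - B t ω)) :=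
    funext fun _ => Real.exp_add _ _
  exact hfactor ▸ h.const_mul _

lemma integral_gbmFactor (hB : IsStandardBM Pr ℱ B) (ht : 0 ≤ t) (htT : t ≤ T) :
    ∫ ω, gbmFactor B σ μ T t ω ∂Pr = Real.exp (μ * (T - t)) := by
  simp only [gbmFactor, Real.exp_add]
  rw [integral_const_mul, ← mgf, hB.mgf_increment ht htT, ← Real.exp_add]
  ring_nf

end IsStandardBM

end

theorem stmt_6_general {Ω : Type*} {mΩ : MeasurableSpace Ω}
    (Pr : Measure Ω) [IsProbabilityMeasure Pr] (ℱ : Filtration ℝ mΩ) (B : ℝ → Ω → ℝ)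
    (hB : IsStandardBM Pr ℱ B)
    (T M P σ μ : ℝ) (hM : 0 < M) (hP : 0 < P)
    (t : ℝ) (ht : t ∈ Set.Icc 0 T) :
    AntitoneOn (fun y => V Pr ℱ B M P σ μ T t y - G M P μ T t y) (Set.Ioi 0) := by
  obtain ⟨ht0, htT⟩ := ht
  intro y hy y' _ hyy'
  have hV := sSup_stoppingRewards_le_add (ℱ := ℱ) htT hM.le hP.le (le_of_lt hy) hyy'
    (gbmFactor_nonneg B σ μ T t) (hB.integrable_gbmFactor ht0 htT)
  rw [hB.integral_gbmFactor ht0 htT, ← V_eq_sSup_stoppingRewards,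
    ← V_eq_sSup_stoppingRewards] at hV
  have hG : G M P μ T t y' - G M P μ T t y = M * (y' - y) * (T - t) * Real.exp (μ * (T - t)) := by
    simp only [G]
    ring
  simp only
  linarith

theorem stmt_6 {Ω : Type*} {mΩ : MeasurableSpace Ω}
    (Pr : Measure Ω) [IsProbabilityMeasure Pr] (ℱ : Filtration ℝ mΩ) (B : ℝ → Ω → ℝ)
    (hB : IsStandardBM Pr ℱ B)
    (T M P σ μ : ℝ) (hT : 0 < T) (hM : 0 < M) (hP : 0 < P) (hσ : 0 < σ)
    (t : ℝ) (ht : t ∈ Set.Icc 0 T) :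
    AntitoneOn (fun y => V Pr ℱ B M P σ μ T t y - G M P μ T t y) (Set.Ioi 0) :=
  stmt_6_general Pr ℱ B hB T M P σ μ hM hP t ht
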